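/- arXiv:2501.19082 — 6 statements merged into one kernel-verified Lean document; each statement's English description precedes it below -/
import Mathlib

section
/- For all real numbers λ and β with 0 < λ < 1 and 0 ≤ β < 1, the quantity h₁(β,λ) = β(1−β)/(λ − 2λβ + β²) is well defined (the denominator is positive) and satisfies h₁(β,λ) ≤ 1/(2√(λ(1−λ))). -/
/-- For `0 < λ < 1` and `0 ≤ β < 1`, the denominator `λ - 2λβ + β²` is
positive and `h₁(β,λ) = β(1-β)/(λ - 2λβ + β²) ≤ 1/(2√(λ(1-λ)))`. -/
theorem h1_bound (lam β : ℝ) (hlam0 : 0 < lam) (hlam1 : lam < 1)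
    (hβ0 : 0 ≤ β) (hβ1 : β < 1) :
    0 < lam - 2 * lam * β + β ^ 2 ∧
      β * (1 - β) / (lam - 2 * lam * β + β ^ 2) ≤
        1 / (2 * Real.sqrt (lam * (1 - lam))) := by
  have hD : 0 < lam - 2 * lam * β + β ^ 2 := by nlinarith [sq_nonneg (β - lam)]
  refine ⟨hD, ?_⟩
  set s := Real.sqrt (lam * (1 - lam)) with hs
  have hs0 : 0 < s := Real.sqrt_pos.mpr (by nlinarith)
  have hs2 : s ^ 2 = lam * (1 - lam) := Real.sq_sqrt (by nlinarith)
  rw [div_le_div_iff₀ hD (by positivity)]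
  nlinarith [sq_nonneg (β - lam - s + 2 * s * β), sq_nonneg (β - lam), sq_nonneg (s - β), hs0, mul_pos hs0 hs0]
end

section
/- For all real numbers λ and β with 0 < λ < 1 and 0 ≤ β < 1, the quantity h₃(β,λ) = √(1−λ)·(1−β)·β²/(λ − 2λβ + β²) is well defined (the denominator is positive) and satisfies h₃(β,λ) ≤ 1. -/
/-!
Write `s = √(1 - λ)`, so that `λ = 1 - s²` and the denominator becomes
`(1 - s²)(1 - β)² + s²β²`. The claim is then `s β² (1 - β - s) ≤ (1 - s²)(1 - β)²`, which is
trivial when `s ≥ 1 - β`; otherwise `1 - β - s ≤ (1 - s)(1 - β)` and `s β² ≤ s < 1 - β`.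
-/

lemma sub_two_mul_mul_add_sq_pos {lam : ℝ} (hlam0 : 0 < lam) (hlam1 : lam < 1) (β : ℝ) :
    0 < lam - 2 * lam * β + β ^ 2 := by
  have hsplit : lam - 2 * lam * β + β ^ 2 = (β - lam) ^ 2 + lam * (1 - lam) := by ring
  rw [hsplit]
  exact add_pos_of_nonneg_of_pos (sq_nonneg _) (mul_pos hlam0 (sub_pos.2 hlam1))

lemma mul_sq_mul_sub_le {s β : ℝ} (hs0 : 0 ≤ s) (hs1 : s ≤ 1) (hβ0 : 0 ≤ β) (hβ1 : β ≤ 1) :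
    s * β ^ 2 * (1 - β - s) ≤ (1 - s ^ 2) * (1 - β) ^ 2 := by
  have hrhs : 0 ≤ (1 - s ^ 2) * (1 - β) ^ 2 := by
    have : s ^ 2 ≤ 1 := pow_le_one₀ hs0 hs1
    exact mul_nonneg (by linarith) (sq_nonneg _)
  rcases le_total (1 - β) s with hle | hlt
  · exact le_trans (mul_nonpos_of_nonneg_of_nonpos (by positivity) (by linarith)) hrhs
  · have hβsq : β ^ 2 ≤ 1 := pow_le_one₀ hβ0 hβ1
    calc s * β ^ 2 * (1 - β - s) ≤ s * β ^ 2 * ((1 - s) * (1 - β)) := by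
          gcongr; nlinarith [mul_nonneg hs0 hβ0]
      _ = (1 - s) * (1 - β) * (s * β ^ 2) := by ring
      _ ≤ (1 - s) * (1 - β) * ((1 + s) * (1 - β)) := by
          refine mul_le_mul_of_nonneg_left ?_ (mul_nonneg (by linarith) (by linarith))
          exact (mul_le_of_le_one_right hs0 hβsq).trans
            (hlt.trans (le_mul_of_one_le_left (by linarith) (by linarith)))
      _ = (1 - s ^ 2) * (1 - β) ^ 2 := by ring

lemma mul_one_sub_mul_sq_le {s β : ℝ} (hs0 : 0 ≤ s) (hs1 : s ≤ 1) (hβ0 : 0 ≤ β) (hβ1 : β ≤ 1) :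
    s * (1 - β) * β ^ 2 ≤ (1 - s ^ 2) - 2 * (1 - s ^ 2) * β + β ^ 2 := by
  linear_combination mul_sq_mul_sub_le hs0 hs1 hβ0 hβ1

/-- For `0 < λ < 1` and `0 ≤ β < 1`, the denominator `λ - 2λβ + β²` is
positive and `h₃(β,λ) = √(1-λ)·(1-β)·β²/(λ - 2λβ + β²) ≤ 1`. -/
theorem h3_bound (lam β : ℝ) (hlam0 : 0 < lam) (hlam1 : lam < 1)
    (hβ0 : 0 ≤ β) (hβ1 : β < 1) :
    0 < lam - 2 * lam * β + β ^ 2 ∧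
      Real.sqrt (1 - lam) * (1 - β) * β ^ 2 / (lam - 2 * lam * β + β ^ 2) ≤ 1 := by
  have hden := sub_two_mul_mul_add_sq_pos hlam0 hlam1 β
  refine ⟨hden, (div_le_one hden).2 ?_⟩
  have hs : Real.sqrt (1 - lam) ^ 2 = 1 - lam := Real.sq_sqrt (by linarith)
  have hs1 : Real.sqrt (1 - lam) ≤ 1 := Real.sqrt_le_one.2 (by linarith)
  simpa only [hs, sub_sub_cancel] using
    mul_one_sub_mul_sq_le (Real.sqrt_nonneg _) hs1 hβ0 hβ1.le
end

section
/- Let 0 < λ < 1 and 0 ≤ β < 1, and let u = λ + i√(λ − λ²), v = λ − i√(λ − λ²). Then for every integer s ≥ 2, the squared modulus | (1−β)/(u−v) · ( (u−1)u^s/(u−β) − (v−1)v^s/(v−β) ) |² is at most 5·λ^{s−2}. -/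
/-!
Since `v = conj u` and `β` is real, the bracket is `T - conj T = 2i Im T` for
`T = (u - 1) uˢ / (u - β)`, while `u - v = 2i Im u`; hence the quantity is at most
`|1 - β| |T| / |Im u|`. The point `u` lies on the circle `|z|² = Re z`, which gives
`|u|² = λ`, `|u - 1|² = 1 - λ`, `(Im u)² = λ - λ²` and `|u - β|² = (λ - β)² + λ - λ²`, so the
square is at most `(1 - β)² λ^(s-1) / ((λ - β)² + λ - λ²)`. Finally
`(1 - β)² λ ≤ 5 ((λ - β)² + λ - λ²)` for all real `β`: as a quadratic in `β` its
discriminant is `80 λ (λ - 1) < 0`.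
-/

open Complex ComplexConjugate

lemma norm_div_sub_conj_mul_sub_conj_sq_le (c z w : ℂ) :
    ‖c / (z - conj z) * (w - conj w)‖ ^ 2 ≤ normSq c * normSq w / z.im ^ 2 := by
  rcases eq_or_ne z.im 0 with hz | hz
  · simp [sub_conj, hz]
  calc ‖c / (z - conj z) * (w - conj w)‖ ^ 2 = normSq c * w.im ^ 2 / z.im ^ 2 := by
        rw [Complex.sq_norm, sub_conj, sub_conj]
        simp only [map_mul, map_div₀, normSq_ofReal, normSq_I]
        field_simp
    _ ≤ normSq c * normSq w / z.im ^ 2 := by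
        gcongr
        · exact normSq_nonneg c
        · nlinarith [im_sq_le_normSq w]

lemma normSq_sub_one_of_normSq_eq_re {z : ℂ} (hz : normSq z = z.re) :
    normSq (z - 1) = 1 - z.re := by
  rw [normSq_sub, hz]
  simp only [map_one, mul_one]
  ring

lemma im_sq_of_normSq_eq_re {z : ℂ} (hz : normSq z = z.re) : z.im ^ 2 = z.re - z.re ^ 2 := by
  rw [normSq_apply] at hz; linarith

lemma one_sub_sq_mul_le {lam : ℝ} (β : ℝ) (hlam0 : 0 ≤ lam) (hlam1 : lam ≤ 1) :
    (1 - β) ^ 2 * lam ≤ 5 * ((lam - β) ^ 2 + (lam - lam ^ 2)) := by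
  -- `(5 - λ) (rhs - lhs) = ((5 - λ) β - 4 λ)² + 20 λ (1 - λ)`
  nlinarith [sq_nonneg ((5 - lam) * β - 4 * lam), mul_nonneg hlam0 (sub_nonneg.2 hlam1)]

lemma norm_eta_sq_le {z : ℂ} (β : ℝ) (s : ℕ) (hz : normSq z = z.re) (him : z.im ≠ 0) :
    ‖(1 - β : ℂ) / (z - conj z) *
        ((z - 1) * z ^ s / (z - β) - (conj z - 1) * conj z ^ s / (conj z - β))‖ ^ 2 ≤
      (1 - β) ^ 2 * z.re ^ s / (z.re * ((z.re - β) ^ 2 + (z.re - z.re ^ 2))) := by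
  have hconj : conj ((z - 1) * z ^ s / (z - β)) = (conj z - 1) * conj z ^ s / (conj z - β) := by
    simp
  have him_sq := im_sq_of_normSq_eq_re hz
  obtain ⟨hre, hre'⟩ : z.re ≠ 0 ∧ 1 - z.re ≠ 0 := by
    rw [← mul_ne_zero_iff, show z.re * (1 - z.re) = z.im ^ 2 by linarith]
    positivity
  have hD : (z.re - β) ^ 2 + (z.re - z.re ^ 2) ≠ 0 := by
    rw [← him_sq]; positivity
  rw [← hconj]
  refine (norm_div_sub_conj_mul_sub_conj_sq_le _ _ _).trans (le_of_eq ?_)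
  have hβ : normSq (1 - β : ℂ) = (1 - β) ^ 2 := by
    rw [← ofReal_one, ← ofReal_sub, normSq_ofReal, sq]
  have hzβ : normSq (z - β) = (z.re - β) ^ 2 + (z.re - z.re ^ 2) := by
    rw [normSq_apply, ← him_sq]
    simp only [sub_re, ofReal_re, sub_im, ofReal_im, sub_zero]
    ring
  rw [hβ, map_div₀, map_mul, map_pow, hz, normSq_sub_one_of_normSq_eq_re hz, hzβ, him_sq]
  field_simp

lemma eta_majorant_le {lam : ℝ} (β : ℝ) (hlam0 : 0 < lam) (hlam1 : lam < 1) {s : ℕ} (hs : 2 ≤ s) :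
    (1 - β) ^ 2 * lam ^ s / (lam * ((lam - β) ^ 2 + (lam - lam ^ 2))) ≤ 5 * lam ^ (s - 2) := by
  have hD : 0 < (lam - β) ^ 2 + (lam - lam ^ 2) := by nlinarith [sq_nonneg (lam - β)]
  obtain ⟨k, rfl⟩ := Nat.exists_eq_add_of_le' hs
  rw [div_le_iff₀ (by positivity), Nat.add_sub_cancel]
  calc (1 - β) ^ 2 * lam ^ (k + 2) = (1 - β) ^ 2 * lam * (lam ^ k * lam) := by ring
    _ ≤ 5 * ((lam - β) ^ 2 + (lam - lam ^ 2)) * (lam ^ k * lam) := by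
        gcongr ?_ * _; exact one_sub_sq_mul_le β hlam0.le hlam1.le
    _ = 5 * lam ^ k * (lam * ((lam - β) ^ 2 + (lam - lam ^ 2))) := by ring

theorem eta_bound_general (lam β : ℝ) (hlam0 : 0 < lam) (hlam1 : lam < 1)
    (s : ℕ) (hs : 2 ≤ s) :
    let u : ℂ := (lam : ℂ) + (Real.sqrt (lam - lam ^ 2) : ℝ) * Complex.I
    let v : ℂ := (lam : ℂ) - (Real.sqrt (lam - lam ^ 2) : ℝ) * Complex.I
    (‖((1 : ℂ) - (β : ℂ)) / (u - v) *
        ((u - 1) * u ^ s / (u - (β : ℂ)) - (v - 1) * v ^ s / (v - (β : ℂ)))‖) ^ 2 ≤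
      5 * lam ^ (s - 2) := by
  intro u v
  have hpos : 0 < lam - lam ^ 2 := by nlinarith
  have hre : u.re = lam := by simp [u]
  have him : u.im = Real.sqrt (lam - lam ^ 2) := by simp [u]
  have hv : v = conj u := by apply Complex.ext <;> simp [u, v]
  have hnormSq : normSq u = u.re := by
    rw [normSq_apply, hre, him, Real.mul_self_sqrt hpos.le]; ring
  rw [hv]
  refine (norm_eta_sq_le β s hnormSq ?_).trans ?_
  · rw [him]; exact (Real.sqrt_pos.2 hpos).ne'
  · rw [hre]; exact eta_majorant_le β hlam0 hlam1 hs

/-- With `u = λ + i√(λ-λ²)`, `v = λ - i√(λ-λ²)`, for every integer `s ≥ 2`,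
`| (1-β)/(u-v) · ( (u-1)uˢ/(u-β) - (v-1)vˢ/(v-β) ) |² ≤ 5 λ^{s-2}`. -/
theorem eta_bound (lam β : ℝ) (hlam0 : 0 < lam) (hlam1 : lam < 1)
    (hβ0 : 0 ≤ β) (hβ1 : β < 1) (s : ℕ) (hs : 2 ≤ s) :
    let u : ℂ := (lam : ℂ) + (Real.sqrt (lam - lam ^ 2) : ℝ) * Complex.I
    let v : ℂ := (lam : ℂ) - (Real.sqrt (lam - lam ^ 2) : ℝ) * Complex.I
    (‖((1 : ℂ) - (β : ℂ)) / (u - v) *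
        ((u - 1) * u ^ s / (u - (β : ℂ)) - (v - 1) * v ^ s / (v - (β : ℂ)))‖) ^ 2 ≤
      5 * lam ^ (s - 2) :=
  eta_bound_general lam β hlam0 hlam1 s hs
end

section
/- Let 0 ≤ λ < 1, 0 ≤ β < 1, L > 0, and 0 < α ≤ (1−√λ)/(4L), and let g(x) = (x − √λ)(x − β) − 8α²L²λ(1−β)/(1−√λ). Then every real root x of g satisfies √λ + β − 1 < x < 1; consequently the 2×2 matrix [[√λ, α²λ/(1−√λ)], [8(1−β)L², β]] has spectral radius strictly less than 1. -/
/-!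
Write `s = √λ` and `c` for the constant term of `g`. The bound on `α` gives `c < (1 - s)(1 - β)`.
A root `x ≥ 1` would make the factors `x - s`, `x - β` at least `1 - s`, `1 - β`, and a root
`x ≤ s + β - 1` would make `s - x`, `β - x` at least `1 - β`, `1 - s`; either way `(x - s)(x - β)`
would exceed `c`. The eigenvalues of the matrix are the roots of its characteristic polynomial `g`,
hence lie in `(-1, 1)`, and there are finitely many of them.
-/

open scoped NNReal ENNReal

theorem spectralRadius_lt_of_finite {𝕜 A : Type*} [NormedField 𝕜] [Ring A] [Algebra 𝕜 A]
    {a : A} (ha : (spectrum 𝕜 a).Finite) {r : ℝ≥0∞} (hr₀ : 0 < r)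
    (hr : ∀ k ∈ spectrum 𝕜 a, (‖k‖₊ : ℝ≥0∞) < r) : spectralRadius 𝕜 a < r := by
  rw [spectralRadius, ← ha.coe_toFinset]
  simp only [Finset.mem_coe, ← Finset.sup_eq_iSup]
  exact (Finset.sup_lt_iff hr₀).2 fun k hk => hr k (ha.mem_toFinset.1 hk)

theorem Matrix.mem_spectrum_fin_two_iff {K : Type*} [Field K] (A : Matrix (Fin 2) (Fin 2) K)
    (k : K) : k ∈ spectrum K A ↔ (k - A 0 0) * (k - A 1 1) - A 0 1 * A 1 0 = 0 := by
  rw [Matrix.mem_spectrum_iff_isRoot_charpoly, Matrix.charpoly_fin_two, Polynomial.IsRoot.def]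
  simp only [Polynomial.eval_add, Polynomial.eval_sub, Polynomial.eval_pow, Polynomial.eval_X,
    Polynomial.eval_mul, Polynomial.eval_C, Matrix.trace_fin_two, Matrix.det_fin_two]
  constructor <;> intro h <;> linear_combination h

theorem mem_Ioo_of_sub_mul_sub_eq {a b c x : ℝ} (ha : a < 1) (hb : b < 1)
    (hc : c < (1 - a) * (1 - b)) (hx : (x - a) * (x - b) = c) : x ∈ Set.Ioo (a + b - 1) 1 := by
  constructor
  · by_contra! h
    nlinarith [mul_le_mul (by linarith : 1 - b ≤ a - x) (by linarith : 1 - a ≤ b - x)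
      (by linarith) (by linarith)]
  · by_contra! h
    nlinarith [mul_le_mul (by linarith : 1 - a ≤ x - a) (by linarith : 1 - b ≤ x - b)
      (by linarith) (by linarith)]

theorem coupling_lt_of_le_div {s lam β L α : ℝ} (hs : s < 1) (hlam : lam ≤ 1) (hβ : β < 1)
    (hL : 0 < L) (hα₀ : 0 ≤ α) (hα : α ≤ (1 - s) / (4 * L)) :
    8 * α ^ 2 * L ^ 2 * lam * (1 - β) / (1 - s) < (1 - s) * (1 - β) := by
  have hαL : 4 * L * α ≤ 1 - s := (le_div_iff₀' (by positivity)).1 hα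
  have hsq : 8 * α ^ 2 * L ^ 2 * lam < (1 - s) ^ 2 := by
    nlinarith [mul_self_le_mul_self (by positivity) hαL, sq_nonneg (α * L)]
  rw [div_lt_iff₀ (by linarith)]
  nlinarith

theorem g_roots_and_spectral_radius_general (lam β L α : ℝ) (hlam1 : lam < 1)
    (hβ0 : 0 ≤ β) (hβ1 : β < 1) (hL : 0 < L) (hα0 : 0 < α)
    (hα : α ≤ (1 - Real.sqrt lam) / (4 * L)) :
    (∀ x : ℝ,
        (x - Real.sqrt lam) * (x - β) -
            8 * α ^ 2 * L ^ 2 * lam * (1 - β) / (1 - Real.sqrt lam) = 0 →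
        Real.sqrt lam + β - 1 < x ∧ x < 1) ∧
      spectralRadius ℝ
          (Matrix.of ![![Real.sqrt lam, α ^ 2 * lam / (1 - Real.sqrt lam)],
            ![8 * (1 - β) * L ^ 2, β]]) < 1 := by
  set s := Real.sqrt lam
  have hs : s < 1 := (Real.sqrt_lt' one_pos).2 (by simpa using hlam1)
  have hroots : ∀ x : ℝ, (x - s) * (x - β) - 8 * α ^ 2 * L ^ 2 * lam * (1 - β) / (1 - s) = 0 →
      s + β - 1 < x ∧ x < 1 := fun x hx =>
    mem_Ioo_of_sub_mul_sub_eq hs hβ1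
      (coupling_lt_of_le_div hs hlam1.le hβ1 hL hα0.le hα) (sub_eq_zero.1 hx)
  refine ⟨hroots, spectralRadius_lt_of_finite (Matrix.finite_spectrum _) one_pos fun k hk => ?_⟩
  rw [Matrix.mem_spectrum_fin_two_iff] at hk
  simp only [Fin.isValue, Matrix.of_apply, Matrix.cons_val', Matrix.cons_val_zero,
    Matrix.cons_val_fin_one, Matrix.cons_val_one] at hk
  obtain ⟨hlo, hhi⟩ := hroots k (by linear_combination hk)
  have hk1 : |k| < 1 := abs_lt.2 ⟨by linarith [Real.sqrt_nonneg lam], hhi⟩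
  exact_mod_cast hk1

/-- For `0 ≤ λ < 1`, `0 ≤ β < 1`, `L > 0`, `0 < α ≤ (1-√λ)/(4L)`, every real
root of `g(x) = (x - √λ)(x - β) - 8α²L²λ(1-β)/(1-√λ)` lies in `(√λ + β - 1, 1)`; consequently
the matrix `[[√λ, α²λ/(1-√λ)], [8(1-β)L², β]]` has spectral radius `< 1`. -/
theorem g_roots_and_spectral_radius (lam β L α : ℝ) (hlam0 : 0 ≤ lam) (hlam1 : lam < 1)
    (hβ0 : 0 ≤ β) (hβ1 : β < 1) (hL : 0 < L) (hα0 : 0 < α)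
    (hα : α ≤ (1 - Real.sqrt lam) / (4 * L)) :
    (∀ x : ℝ,
        (x - Real.sqrt lam) * (x - β) -
            8 * α ^ 2 * L ^ 2 * lam * (1 - β) / (1 - Real.sqrt lam) = 0 →
        Real.sqrt lam + β - 1 < x ∧ x < 1) ∧
      spectralRadius ℝ
          (Matrix.of ![![Real.sqrt lam, α ^ 2 * lam / (1 - Real.sqrt lam)],
            ![8 * (1 - β) * L ^ 2, β]]) < 1 :=
  g_roots_and_spectral_radius_general lam β L α hlam1 hβ0 hβ1 hL hα0 hα
end

section
/- Suppose each f_i is L-smooth and the averaged EDM iterates satisfy x̄^(r+1) = x̄^(r) − α·m̄^(r) for all r. Define Ñ^(t) = (1−β)·Σ_{j=0}^{t} β^{t−j}·∇𝐟(X̄^(j)) + β^{t+1}·∇𝐟(X̄^(0)). Then for every t ≥ 0, ‖P_I(Ñ^(t+1) − Ñ^(t))‖_F² ≤ n·α²L²·Σ_{r=0}^{t} (1−β)·β^{t−r}·‖m̄^(r)‖². -/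
/-! Row by row, `Ñ^(t+1) - Ñ^(t)` telescopes to `Σ_r (1-β) β^(t-r) (∇f_i(x̄^(r+1)) - ∇f_i(x̄^(r)))`,
whose nonnegative weights sum to `1 - β^(t+1) ≤ 1`; by Cauchy–Schwarz its squared norm is at most
the weighted sum of the squared increments, each of which smoothness bounds by `α² L² ‖m̄^(r)‖²`.
Subtracting the row mean (applying `P_I`) only decreases the Frobenius norm. -/

noncomputable section

/-- The auxiliary sequence `Ñ^(t) = (1-β)·Σ_{j=0}^t β^{t-j}·∇𝐟(X̄^(j)) + β^{t+1}·∇𝐟(X̄^(0))`;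
its `i`-th row is given here (row `i` of `∇𝐟(X̄^(j))` is `∇f_i(x̄^(j))`). -/
def Ntil {n d : ℕ} (f : Fin n → EuclideanSpace ℝ (Fin d) → ℝ) (β : ℝ)
    (xbar : ℕ → EuclideanSpace ℝ (Fin d)) (t : ℕ) (i : Fin n) :
    EuclideanSpace ℝ (Fin d) :=
  (1 - β) • ∑ j ∈ Finset.range (t + 1), β ^ (t - j) • gradient (f i) (xbar j) +
    β ^ (t + 1) • gradient (f i) (xbar 0)

open Finset

section Variance

variable {ι E : Type*} [Fintype ι] [NormedAddCommGroup E] [InnerProductSpace ℝ E]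

theorem sum_norm_sub_mean_sq (v : ι → E) :
    ∑ i, ‖v i - (Fintype.card ι : ℝ)⁻¹ • ∑ j, v j‖ ^ 2 =
      ∑ i, ‖v i‖ ^ 2 - (Fintype.card ι : ℝ)⁻¹ * ‖∑ j, v j‖ ^ 2 := by
  set N : ℝ := (Fintype.card ι : ℝ)
  have hN : N * (N⁻¹) ^ 2 = N⁻¹ := by
    rcases eq_or_ne N 0 with h | h
    · simp [h]
    · field_simp
  simp only [norm_sub_sq_real, sum_add_distrib, sum_sub_distrib, ← mul_sum, ← sum_inner,
    real_inner_smul_right, real_inner_self_eq_norm_sq, norm_smul, Real.norm_eq_abs, mul_pow,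
    sq_abs, sum_const, card_univ, nsmul_eq_mul]
  linear_combination ‖∑ j, v j‖ ^ 2 * hN

theorem sum_norm_sub_mean_sq_le (v : ι → E) :
    ∑ i, ‖v i - (Fintype.card ι : ℝ)⁻¹ • ∑ j, v j‖ ^ 2 ≤ ∑ i, ‖v i‖ ^ 2 := by
  rw [sum_norm_sub_mean_sq]
  have : 0 ≤ (Fintype.card ι : ℝ)⁻¹ * ‖∑ j, v j‖ ^ 2 := by positivity
  linarith

end Variance

section ExpMovingAverage

variable {E : Type*}

def expMovingAverage [AddCommGroup E] [Module ℝ E] (β : ℝ) (g : ℕ → E) (t : ℕ) : E :=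
  (1 - β) • ∑ j ∈ range (t + 1), β ^ (t - j) • g j + β ^ (t + 1) • g 0

theorem Ntil_eq_expMovingAverage {n d : ℕ} (f : Fin n → EuclideanSpace ℝ (Fin d) → ℝ)
    (β : ℝ) (xbar : ℕ → EuclideanSpace ℝ (Fin d)) (t : ℕ) (i : Fin n) :
    Ntil f β xbar t i = expMovingAverage β (fun j => gradient (f i) (xbar j)) t :=
  rfl

theorem expMovingAverage_succ_sub [AddCommGroup E] [Module ℝ E] (β : ℝ) (g : ℕ → E) (t : ℕ) :
    expMovingAverage β g (t + 1) - expMovingAverage β g t =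
      ∑ r ∈ range (t + 1), ((1 - β) * β ^ (t - r)) • (g (r + 1) - g r) := by
  unfold expMovingAverage
  rw [sum_range_succ' (fun j => β ^ (t + 1 - j) • g j)]
  simp only [Nat.add_sub_add_right, Nat.sub_zero, mul_smul, ← smul_sum, smul_sub, sum_sub_distrib]
  module

theorem one_sub_mul_sum_range_pow_sub (β : ℝ) (t : ℕ) :
    (1 - β) * ∑ r ∈ range (t + 1), β ^ (t - r) = 1 - β ^ (t + 1) := by
  rw [← mul_neg_geom_sum, ← sum_range_reflect (β ^ ·), add_tsub_cancel_right]

theorem norm_sum_smul_sq_le [SeminormedAddCommGroup E] [NormedSpace ℝ E] {ι : Type*}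
    (s : Finset ι) (w : ι → ℝ) (x : ι → E) (hw : ∀ i ∈ s, 0 ≤ w i)
    (hw_sum : ∑ i ∈ s, w i ≤ 1) :
    ‖∑ i ∈ s, w i • x i‖ ^ 2 ≤ ∑ i ∈ s, w i * ‖x i‖ ^ 2 := by
  have hw_norm : ∀ i ∈ s, 0 ≤ w i * ‖x i‖ ^ 2 := fun i hi => by have := hw i hi; positivity
  calc ‖∑ i ∈ s, w i • x i‖ ^ 2 ≤ (∑ i ∈ s, w i * ‖x i‖) ^ 2 := by
        gcongr
        refine norm_sum_le_of_le s fun i hi => ?_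
        rw [norm_smul, Real.norm_of_nonneg (hw i hi)]
    _ ≤ (∑ i ∈ s, w i) * ∑ i ∈ s, w i * ‖x i‖ ^ 2 :=
        sum_sq_le_sum_mul_sum_of_sq_le_mul s hw hw_norm fun i _ => le_of_eq (by ring)
    _ ≤ ∑ i ∈ s, w i * ‖x i‖ ^ 2 := mul_le_of_le_one_left (sum_nonneg hw_norm) hw_sum

theorem norm_expMovingAverage_succ_sub_sq_le [SeminormedAddCommGroup E] [NormedSpace ℝ E]
    {β : ℝ} (hβ0 : 0 ≤ β) (hβ1 : β ≤ 1) (g : ℕ → E) (t : ℕ) :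
    ‖expMovingAverage β g (t + 1) - expMovingAverage β g t‖ ^ 2 ≤
      ∑ r ∈ range (t + 1), (1 - β) * β ^ (t - r) * ‖g (r + 1) - g r‖ ^ 2 := by
  rw [expMovingAverage_succ_sub]
  refine norm_sum_smul_sq_le _ _ _ (fun r _ => ?_) ?_
  · exact mul_nonneg (sub_nonneg.2 hβ1) (pow_nonneg hβ0 _)
  · rw [← mul_sum, one_sub_mul_sum_range_pow_sub]
    linarith [pow_nonneg hβ0 (t + 1)]

end ExpMovingAverage

theorem consensus_gradient_difference_bound_general {n d : ℕ}
    (f : Fin n → EuclideanSpace ℝ (Fin d) → ℝ)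
    (L : ℝ)
    (hsmooth : ∀ i x y, ‖gradient (f i) x - gradient (f i) y‖ ≤ L * ‖x - y‖)
    (α β : ℝ) (hβ0 : 0 ≤ β) (hβ1 : β < 1)
    (xbar mbar : ℕ → EuclideanSpace ℝ (Fin d))
    (hupd : ∀ r : ℕ, xbar (r + 1) = xbar r - α • mbar r) :
    ∀ t : ℕ,
      ∑ i, ‖(Ntil f β xbar (t + 1) i - Ntil f β xbar t i) -
          (n : ℝ)⁻¹ • ∑ j, (Ntil f β xbar (t + 1) j - Ntil f β xbar t j)‖ ^ 2 ≤
        n * α ^ 2 * L ^ 2 *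
          ∑ r ∈ Finset.range (t + 1), (1 - β) * β ^ (t - r) * ‖mbar r‖ ^ 2 := by
  intro t
  have hstep : ∀ i r, ‖gradient (f i) (xbar (r + 1)) - gradient (f i) (xbar r)‖ ^ 2 ≤
      α ^ 2 * L ^ 2 * ‖mbar r‖ ^ 2 := fun i r => by
    have h := hsmooth i (xbar (r + 1)) (xbar r)
    rw [hupd, sub_sub_cancel_left, norm_neg, norm_smul, Real.norm_eq_abs] at h
    rw [hupd]
    calc _ ≤ (L * (|α| * ‖mbar r‖)) ^ 2 := by gcongr
      _ = _ := by rw [mul_pow, mul_pow, sq_abs]; ring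
  have hrow : ∀ i, ‖Ntil f β xbar (t + 1) i - Ntil f β xbar t i‖ ^ 2 ≤
      α ^ 2 * L ^ 2 * ∑ r ∈ range (t + 1), (1 - β) * β ^ (t - r) * ‖mbar r‖ ^ 2 := fun i => by
    simp only [Ntil_eq_expMovingAverage, mul_sum]
    refine (norm_expMovingAverage_succ_sub_sq_le hβ0 hβ1.le _ t).trans (sum_le_sum fun r _ => ?_)
    have hw : 0 ≤ (1 - β) * β ^ (t - r) := mul_nonneg (by linarith) (pow_nonneg hβ0 _)
    linarith [mul_le_mul_of_nonneg_left (hstep i r) hw]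
  calc _ ≤ ∑ i, ‖Ntil f β xbar (t + 1) i - Ntil f β xbar t i‖ ^ 2 := by
        simpa using sum_norm_sub_mean_sq_le fun i => Ntil f β xbar (t + 1) i - Ntil f β xbar t i
    _ ≤ ∑ _i : Fin n, α ^ 2 * L ^ 2 *
          ∑ r ∈ range (t + 1), (1 - β) * β ^ (t - r) * ‖mbar r‖ ^ 2 := sum_le_sum fun i _ => hrow i
    _ = _ := by rw [sum_const, card_univ, Fintype.card_fin, nsmul_eq_mul]; ring

/-- if each `f_i` is `L`-smooth and the averaged iterates satisfy
`x̄^{r+1} = x̄^r - α m̄^r`, then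
`‖P_I(Ñ^{t+1} - Ñ^t)‖_F² ≤ n α² L² Σ_{r=0}^t (1-β) β^{t-r} ‖m̄^r‖²`. -/
theorem consensus_gradient_difference_bound {n d : ℕ} (hn : 0 < n)
    (f : Fin n → EuclideanSpace ℝ (Fin d) → ℝ)
    (L : ℝ) (hL : 0 < L)
    (hdiff : ∀ i, Differentiable ℝ (f i))
    (hsmooth : ∀ i x y, ‖gradient (f i) x - gradient (f i) y‖ ≤ L * ‖x - y‖)
    (α β : ℝ) (hα : 0 < α) (hβ0 : 0 ≤ β) (hβ1 : β < 1)
    (xbar mbar : ℕ → EuclideanSpace ℝ (Fin d))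
    (hupd : ∀ r : ℕ, xbar (r + 1) = xbar r - α • mbar r) :
    ∀ t : ℕ,
      ∑ i, ‖(Ntil f β xbar (t + 1) i - Ntil f β xbar t i) -
          (n : ℝ)⁻¹ • ∑ j, (Ntil f β xbar (t + 1) j - Ntil f β xbar t j)‖ ^ 2 ≤
        n * α ^ 2 * L ^ 2 *
          ∑ r ∈ Finset.range (t + 1), (1 - β) * β ^ (t - r) * ‖mbar r‖ ^ 2 :=
  consensus_gradient_difference_bound_general f L hsmooth α β hβ0 hβ1 xbar mbar hupd
end
end

section
/- Let W be an n×n symmetric doubly stochastic positive semidefinite matrix, so that I − W is positive semidefinite with positive semidefinite square root (I − W)^{1/2}. Let M̃^(t) (t ≥ −1, with M̃^(−1) = 0) be any sequence in ℝ^{n×d}, and define sequences X̃^(t), Ỹ^(t) by Ỹ^(0) = 0, X̃^(0) given, and for t ≥ 0: X̃^(t+1) = W(X̃^(t) − αM̃^(t)) − (I − W)^{1/2}·Ỹ^(t) and Ỹ^(t+1) = Ỹ^(t) + (I − W)^{1/2}·X̃^(t+1). Then, setting X̃^(−1) = X̃^(0), the sequence X̃ satisfies the second-order recursion X̃^(t+1)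 = W(2X̃^(t) − X̃^(t−1) − αM̃^(t) + αM̃^(t−1)) for all t ≥ 0. -/
/-!
Eliminating `Ỹ` between two consecutive steps: the step at `t - 1` expresses `S Ỹ^{t-1}` through
`X̃^{t-1}` and `X̃^t`, and the update of `Ỹ` turns `S Ỹ^t` into `S Ỹ^{t-1} + S² X̃^t`, where
`S² = I - W`. At `t = 0` the conventions `Ỹ^0 = 0`, `X̃^{-1} = X̃^0`, `M̃^{-1} = 0` make the
first-order step already of second-order form.
-/

namespace Matrix

variable {m p R : Type*} [Fintype m] [DecidableEq m] [CommRing R]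

theorem second_order_of_two_steps (W S : Matrix m m R) (hSsq : S * S = 1 - W) (α : R)
    (M₀ M₁ X₀ X₁ X₂ Y₀ Y₁ : Matrix m p R)
    (hX₁ : X₁ = W * (X₀ - α • M₀) - S * Y₀) (hY₁ : Y₁ = Y₀ + S * X₁)
    (hX₂ : X₂ = W * (X₁ - α • M₁) - S * Y₁) :
    X₂ = W * ((2 : R) • X₁ - X₀ - α • M₁ + α • M₀) := by
  have hSY₀ : S * Y₀ = W * (X₀ - α • M₀) - X₁ := by
    rw [hX₁]; abel
  rw [hX₂, hY₁, Matrix.mul_add, hSY₀, ← Matrix.mul_assoc, hSsq]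
  simp only [Matrix.mul_sub, Matrix.mul_add, Matrix.mul_smul, Matrix.one_mul, Matrix.sub_mul,
    two_smul]
  abel

end Matrix

theorem exact_diffusion_second_order_recursion_general {n d : ℕ}
    (W : Matrix (Fin n) (Fin n) ℝ)
    (S : Matrix (Fin n) (Fin n) ℝ)
    (hSsq : S * S = 1 - W)
    (α : ℝ)
    (Mt Xt Yt : ℤ → Matrix (Fin n) (Fin d) ℝ)
    (hMm1 : Mt (-1) = 0)
    (hY0 : Yt 0 = 0)
    (hXm1 : Xt (-1) = Xt 0)
    (hXrec : ∀ t : ℤ, 0 ≤ t → Xt (t + 1) = W * (Xt t - α • Mt t) - S * Yt t)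
    (hYrec : ∀ t : ℤ, 0 ≤ t → Yt (t + 1) = Yt t + S * Xt (t + 1)) :
    ∀ t : ℤ, 0 ≤ t →
      Xt (t + 1) = W * ((2 : ℝ) • Xt t - Xt (t - 1) - α • Mt t + α • Mt (t - 1)) := by
  intro t ht
  obtain rfl | ht₁ := eq_or_lt_of_le ht
  · rw [hXrec 0 le_rfl, hY0, Matrix.mul_zero, sub_zero, zero_sub, hXm1, hMm1]
    congr 1
    module
  · have hstep := hXrec (t - 1) (by omega)
    have hY := hYrec (t - 1) (by omega)
    rw [sub_add_cancel] at hstep hY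
    exact Matrix.second_order_of_two_steps W S hSsq α _ _ _ _ _ _ _ hstep hY (hXrec t ht)

/-- For a symmetric doubly stochastic PSD matrix `W` with PSD square root
`S = (I - W)^{1/2}` (i.e. `S` is PSD, `S * S = 1 - W`, and `S` commutes with `W`), the
first-order system `X̃^{t+1} = W(X̃^t - αM̃^t) - S Ỹ^t`, `Ỹ^{t+1} = Ỹ^t + S X̃^{t+1}`,
`Ỹ^0 = 0`, `M̃^{-1} = 0`, with the convention `X̃^{-1} = X̃^0`, satisfies the second-order
recursion `X̃^{t+1} = W(2X̃^t - X̃^{t-1} - αM̃^t + αM̃^{t-1})` for all `t ≥ 0`. -/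
theorem exact_diffusion_second_order_recursion {n d : ℕ}
    (W : Matrix (Fin n) (Fin n) ℝ)
    (hWsymm : W.IsSymm)
    (hWnonneg : ∀ i j, 0 ≤ W i j)
    (hWrow : ∀ i, ∑ j, W i j = 1)
    (hWcol : ∀ j, ∑ i, W i j = 1)
    (hWpsd : W.PosSemidef)
    (S : Matrix (Fin n) (Fin n) ℝ)
    (hSpsd : S.PosSemidef)
    (hSsq : S * S = 1 - W)
    (hSW : S * W = W * S)
    (α : ℝ) (hα : 0 < α)
    (Mt Xt Yt : ℤ → Matrix (Fin n) (Fin d) ℝ)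
    (hMm1 : Mt (-1) = 0)
    (hY0 : Yt 0 = 0)
    (hXm1 : Xt (-1) = Xt 0)
    (hXrec : ∀ t : ℤ, 0 ≤ t → Xt (t + 1) = W * (Xt t - α • Mt t) - S * Yt t)
    (hYrec : ∀ t : ℤ, 0 ≤ t → Yt (t + 1) = Yt t + S * Xt (t + 1)) :
    ∀ t : ℤ, 0 ≤ t →
      Xt (t + 1) = W * ((2 : ℝ) • Xt t - Xt (t - 1) - α • Mt t + α • Mt (t - 1)) :=
  exact_diffusion_second_order_recursion_general W S hSsq α Mt Xt Yt hMm1 hY0 hXm1 hXrec hYrec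
end
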